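/- John–Nirenberg inequality for BMO_θ(ρ): if f ∈ BMO_θ(ρ), then there exist positive constants γ and C, depending only on n, θ, and ρ, such that for every ball B, |B|^{-1}∫_B exp( γ|f(x) − f_B| / (‖f‖_{BMO_θ(ρ)} Ψ_{θ'}(B)) ) dx ≤ C, where θ' = (l₀+1)θ. -/

import Mathlib

open MeasureTheory Metric Set

/-- Average of `f` over the ball `B(x₀,r)`. -/
noncomputable def ballAvg {n : ℕ} (f : EuclideanSpace ℝ (Fin n) → ℝ)
    (x₀ : EuclideanSpace ℝ (Fin n)) (r : ℝ) : ℝ :=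
  (volume (ball x₀ r)).toReal⁻¹ * ∫ y in ball x₀ r, f y

/-- The set of normalized oscillations defining the `BMO_θ(ρ)` norm. -/
def bmoOscSet {n : ℕ} (ρ : EuclideanSpace ℝ (Fin n) → ℝ) (θ : ℝ)
    (f : EuclideanSpace ℝ (Fin n) → ℝ) : Set ℝ :=
  {a : ℝ | ∃ (x₀ : EuclideanSpace ℝ (Fin n)) (r : ℝ), 0 < r ∧
    a = ((1 + r / ρ x₀) ^ θ * (volume (ball x₀ r)).toReal)⁻¹ *
      ∫ y in ball x₀ r, |f y - ballAvg f x₀ r|}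

/-- The `BMO_θ(ρ)` norm. -/
noncomputable def bmoNorm {n : ℕ} (ρ : EuclideanSpace ℝ (Fin n) → ℝ) (θ : ℝ)
    (f : EuclideanSpace ℝ (Fin n) → ℝ) : ℝ :=
  sSup (bmoOscSet ρ θ f)



open MeasureTheory Metric Set ENNReal

namespace JNdev

variable {n : ℕ}

local notation "E" => EuclideanSpace ℝ (Fin n)

/-- average over closed ball -/
noncomputable def cAvg (f : E → ℝ) (y : E) (s : ℝ) : ℝ :=
  (volume (closedBall y s)).toReal⁻¹ * ∫ x in closedBall y s, f x

lemma vol_cb (y : E) {s : ℝ} (hs : 0 ≤ s) :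
    volume (closedBall y s)
      = ENNReal.ofReal (s ^ n) * volume (closedBall (0 : E) 1) := by
  rw [Measure.addHaar_closedBall' volume y hs, finrank_euclideanSpace_fin]

lemma vol_cb_toReal (y : E) {s : ℝ} (hs : 0 ≤ s) :
    (volume (closedBall y s)).toReal
      = s ^ n * (volume (closedBall (0 : E) 1)).toReal := by
  rw [vol_cb y hs, ENNReal.toReal_mul, ENNReal.toReal_ofReal (by positivity)]

lemma vol_cb_pos (y : E) {s : ℝ} (hs : 0 < s) :
    0 < (volume (closedBall y s)).toReal :=
  ENNReal.toReal_pos (measure_closedBall_pos volume y hs).ne'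
    measure_closedBall_lt_top.ne

lemma vol_cb_le_scale {y z : E} {a b : ℝ} (ha : 0 ≤ a) (c : ℝ) (hc : 0 ≤ c)
    (h : a ≤ c * b) (hb : 0 ≤ b) :
    volume (closedBall y a) ≤ ENNReal.ofReal (c ^ n) * volume (closedBall z b) := by
  rw [vol_cb y ha, vol_cb z hb, ← mul_assoc, ← ENNReal.ofReal_mul (by positivity),
    ← mul_pow]
  gcongr
  all_goals first
    | exact pow_le_pow_left ha h n
    | skip

lemma integrableOn_cb {f : E → ℝ} (hf : LocallyIntegrable f volume) (y : E) (s : ℝ) :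
    IntegrableOn f (closedBall y s) volume :=
  hf.integrableOn_isCompact (isCompact_closedBall y s)

lemma integrableOn_abs_sub {f : E → ℝ} (hf : LocallyIntegrable f volume) (y : E)
    (s : ℝ) (c : ℝ) :
    IntegrableOn (fun x => |f x - c|) (closedBall y s) volume :=
  ((integrableOn_cb hf y s).sub (integrableOn_const measure_closedBall_lt_top.ne)).abs

lemma abs_cAvg_sub_le {f : E → ℝ} (hf : LocallyIntegrable f volume) {y : E} {s : ℝ}
    (hs : 0 < s) (c : ℝ) :
    |cAvg f y s - c|
      ≤ (volume (closedBall y s)).toReal⁻¹ * ∫ x in closedBall y s, |f x - c| := by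
  have hvol : 0 < (volume (closedBall y s)).toReal := vol_cb_pos y hs
  have hInt : IntegrableOn f (closedBall y s) volume := integrableOn_cb hf y s
  have hconst : IntegrableOn (fun _ : E => c) (closedBall y s) volume :=
    integrableOn_const measure_closedBall_lt_top.ne
  have key : cAvg f y s - c
      = (volume (closedBall y s)).toReal⁻¹ * ∫ x in closedBall y s, (f x - c) := by
    rw [integral_sub hInt hconst, setIntegral_const, measureReal_def, smul_eq_mul, cAvg]
    field_simp
  rw [key, abs_mul, abs_of_nonneg (by positivity)]
  gcongr
  simpa [Real.norm_eq_abs] using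
    norm_integral_le_integral_norm (μ := volume.restrict (closedBall y s))
      (f := fun x => f x - c)

end JNdev

section BIG

variable {n : ℕ}
local notation "E" => EuclideanSpace ℝ (Fin n)

open JNdev in
set_option maxHeartbeats 1000000 in
lemma jn_induction (f : E → ℝ) (hf : LocallyIntegrable f volume)
    (x₀ : E) (r M : ℝ) (hr : 0 < r) (hM : 0 < M)
    (hosc : ∀ y s, 0 < s → s ≤ 8*r → dist y x₀ ≤ 4*r →
      (∫ x in closedBall y s, |f x - cAvg f y s|) ≤ M * (volume (closedBall y s)).toReal) :
    ∀ k : ℕ, ∀ y s, 0 < s → s ≤ 2*r → dist y x₀ + 2*s ≤ 4*r →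
      volume {x ∈ closedBall y s | (k : ℝ) * (2*40^n*((1+2^n)*M)) < |f x - cAvg f y s|}
        ≤ (1/2 : ℝ≥0∞)^k * volume (closedBall y s) := by
  set M' : ℝ := (1+2^n)*M with hM'def
  have hM' : (0:ℝ) < M' := by positivity
  set Λ : ℝ := 2*40^n*M' with hΛdef
  have hΛpos : 0 < Λ := by positivity
  have h40 : (40:ℝ)^n * M' < Λ := by
    rw [hΛdef]; nlinarith [pow_pos (by norm_num : (0:ℝ) < 40) n]
  intro k
  induction k with
  | zero =>
    intro y s hs _ _
    simpa using measure_mono (sep_subset (closedBall y s) _)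
  | succ k ih =>
    intro y s hs hs2r hsd
    have hdyx : dist y x₀ ≤ 4*r := by
      have := dist_nonneg (x := y) (y := x₀); linarith
    set c' := cAvg f y s with hc'def
    set B2 : Set E := closedBall y (2*s) with hB2def
    have hsubB2 : closedBall y s ⊆ B2 := closedBall_subset_closedBall (by linarith)
    have hvol2 : (volume B2).toReal = 2^n * (volume (closedBall y s)).toReal := by
      rw [hB2def, vol_cb_toReal y (by linarith : (0:ℝ) ≤ 2*s), vol_cb_toReal y hs.le,
        mul_pow]; ring
    have hvol1pos := vol_cb_pos (n := n) y hs
    -- oscillation bound on B2 against c'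
    have osc2 : (∫ x in B2, |f x - c'|) ≤ M' * (volume B2).toReal := by
      set c₂ := cAvg f y (2*s) with hc₂def
      have h1 : (∫ x in B2, |f x - c₂|) ≤ M * (volume B2).toReal :=
        hosc y (2*s) (by linarith) (by linarith) hdyx
      have h2 : |c' - c₂| ≤ M * 2^n := by
        have ha := abs_cAvg_sub_le hf (y := y) hs c₂
        have hmono : (∫ x in closedBall y s, |f x - c₂|) ≤ ∫ x in B2, |f x - c₂| := by
          apply setIntegral_mono_set (integrableOn_abs_sub hf y (2*s) c₂)
          · filter_upwards with x using abs_nonneg _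
          · exact HasSubset.Subset.eventuallyLE hsubB2
        calc |c' - c₂| ≤ (volume (closedBall y s)).toReal⁻¹
              * ∫ x in closedBall y s, |f x - c₂| := ha
          _ ≤ (volume (closedBall y s)).toReal⁻¹ * (M * (volume B2).toReal) := by
              gcongr
              exact hmono.trans h1
          _ = M * 2^n := by
              rw [hvol2]; field_simp
      have hptwise : ∀ x, |f x - c'| ≤ |f x - c₂| + |c' - c₂| := by
        intro x
        have := abs_sub_le (f x) c₂ c'
        calc |f x - c'| ≤ |f x - c₂| + |c₂ - c'| := this
          _ = |f x - c₂| + |c' - c₂| := by rw [abs_sub_comm c₂ c']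
      calc (∫ x in B2, |f x - c'|)
          ≤ ∫ x in B2, (|f x - c₂| + |c' - c₂|) := by
            apply integral_mono (integrableOn_abs_sub hf y (2*s) c')
            · exact (integrableOn_abs_sub hf y (2*s) c₂).add
                (integrableOn_const measure_closedBall_lt_top.ne)
            · exact hptwise
        _ = (∫ x in B2, |f x - c₂|) + |c' - c₂| * (volume B2).toReal := by
            rw [integral_add (integrableOn_abs_sub hf y (2*s) c₂)
              (integrableOn_const measure_closedBall_lt_top.ne),
              setIntegral_const, measureReal_def, smul_eq_mul]
            ring
        _ ≤ M * (volume B2).toReal + M * 2^n * (volume B2).toReal := by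
            gcongr
        _ = M' * (volume B2).toReal := by rw [hM'def]; ring
    -- the localized function g
    set g : E → ℝ := B2.indicator (fun x => |f x - c'|) with hgdef
    have hg_nonneg : ∀ x, 0 ≤ g x := fun x =>
      Set.indicator_nonneg (fun z _ => abs_nonneg _) x
    have hg_int : Integrable g volume :=
      (integrableOn_abs_sub hf y (2*s) c').integrable_indicator measurableSet_closedBall
    have hg_eq : ∀ (z : E) (a : ℝ), closedBall z a ⊆ B2 →
        (∫ x in closedBall z a, g x) = ∫ x in closedBall z a, |f x - c'| :=
      fun z a ht => setIntegral_congr_fun measurableSet_closedBall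
        (fun x hx => Set.indicator_of_mem (ht hx) _)
    -- total mass bound for g on any set
    have hg_total : ∀ t : Set E, (∫ x in t, g x) ≤ M' * (volume B2).toReal := by
      intro t
      calc (∫ x in t, g x) ≤ ∫ x, g x :=
            setIntegral_le_integral hg_int (by filter_upwards with x using hg_nonneg x)
        _ = ∫ x in B2, |f x - c'| := by
            rw [← integral_indicator measurableSet_closedBall]
        _ ≤ M' * (volume B2).toReal := osc2
    -- averages of g
    set avgS : E → ℝ → ℝ :=
      fun x R => (volume (closedBall x R)).toReal⁻¹ * ∫ z in closedBall x R, g z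
      with havgSdef
    have hκpos : 0 < (volume (closedBall (0:E) 1)).toReal := vol_cb_pos _ one_pos
    -- upper bound for averages at radii > s/20
    have havg_le : ∀ (x : E) (R : ℝ), s/20 < R → avgS x R ≤ 40^n * M' := by
      intro x R hR
      have hRpos : 0 < R := lt_trans (by positivity) hR
      have hvolR : (volume (closedBall x R)).toReal
          = R^n * (volume (closedBall (0:E) 1)).toReal := vol_cb_toReal x hRpos.le
      have hvolRpos : 0 < (volume (closedBall x R)).toReal := vol_cb_pos x hRpos
      have hB2vol : (volume B2).toReal
          = (2*s)^n * (volume (closedBall (0:E) 1)).toReal :=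
        vol_cb_toReal y (by linarith)
      have h1 : (∫ z in closedBall x R, g z) ≤ M' * ((2*s)^n
          * (volume (closedBall (0:E) 1)).toReal) := by
        rw [← hB2vol]; exact hg_total _
      rw [havgSdef]
      rw [inv_mul_le_iff₀ hvolRpos]
      have hpow : (2*s)^n ≤ (40*R)^n :=
        pow_le_pow_left₀ (by linarith) (by linarith) n
      calc (∫ z in closedBall x R, g z)
          ≤ M' * ((2*s)^n * (volume (closedBall (0:E) 1)).toReal) := h1
        _ ≤ M' * ((40*R)^n * (volume (closedBall (0:E) 1)).toReal) := by gcongr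
        _ = (volume (closedBall x R)).toReal * (40^n * M') := by
            rw [hvolR, mul_pow]; ring
    -- stopping sets
    set S : E → Set ℝ := fun x => {R | 0 < R ∧ Λ < avgS x R} with hSdef
    have hS_bdd : ∀ x : E, S x ⊆ Ioc 0 (s/20) := by
      intro x R hR
      refine ⟨hR.1, ?_⟩
      by_contra hcon
      push_neg at hcon
      have := havg_le x R hcon
      have := hR.2
      linarith
    have hS_bddAbove : ∀ x : E, BddAbove (S x) :=
      fun x => ⟨s/20, fun R hR => (hS_bdd x hR).2⟩
    set rfun : E → ℝ := fun x => sSup (S x) with hrfundef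
    -- the exceptional set
    have hleb : ∀ᵐ x ∂(volume : Measure E),
        Filter.Tendsto (fun R : ℝ => ⨍ z in closedBall x R, g z) (nhdsWithin 0 (Set.Ioi 0))
          (nhds (g x)) := by
      filter_upwards [IsUnifLocDoublingMeasure.ae_tendsto_average
        (μ := (volume : Measure E)) hg_int.locallyIntegrable 1] with x hx
      exact hx (fun _ => x) id Filter.tendsto_id
        (by filter_upwards [self_mem_nhdsWithin] with R hR;
            exact mem_closedBall_self (by simpa using le_of_lt hR))
    set N : Set E := {x | ¬ Filter.Tendsto (fun R : ℝ => ⨍ z in closedBall x R, g z)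
        (nhdsWithin 0 (Set.Ioi 0)) (nhds (g x))} with hNdef
    have hNnull : volume N = 0 := hleb
    set E1 : Set E := {x ∈ closedBall y s | ((k:ℝ)+1) * Λ < |f x - c'|} with hE1def
    -- stopping time properties on E1 \ N
    have hstop : ∀ x ∈ E1 \ N, (S x).Nonempty ∧ 0 < rfun x ∧ rfun x ≤ s/20 ∧
        (∀ R, rfun x < R → avgS x R ≤ Λ) := by
      intro x hx
      obtain ⟨hxE1, hxN⟩ := hx
      have hgx : Λ < g x := by
        have hx2 : x ∈ B2 := hsubB2 hxE1.1
        rw [hgdef]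
        rw [Set.indicator_of_mem hx2]
        have : ((k:ℝ)+1) * Λ < |f x - c'| := hxE1.2
        nlinarith [Nat.cast_nonneg (α := ℝ) k]
      have htend : Filter.Tendsto (fun R : ℝ => ⨍ z in closedBall x R, g z)
          (nhdsWithin 0 (Set.Ioi 0)) (nhds (g x)) := not_not.mp (fun h => hxN h)
      have hev : ∀ᶠ R in nhdsWithin (0:ℝ) (Set.Ioi 0), Λ < ⨍ z in closedBall x R, g z :=
        htend.eventually (eventually_gt_nhds hgx)
      have hex : ∃ R, (Λ < ⨍ z in closedBall x R, g z) ∧ R ∈ Set.Ioi (0:ℝ) :=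
        (hev.and self_mem_nhdsWithin).exists
      obtain ⟨R, hR1, hR2⟩ := hex
      have hRavg : Λ < avgS x R := by
        rw [havgSdef]
        have := hR1
        rwa [setAverage_eq, smul_eq_mul] at this
      have hSne : (S x).Nonempty := ⟨R, hR2, hRavg⟩
      have h1 : 0 < rfun x := lt_of_lt_of_le hR2 (le_csSup (hS_bddAbove x) ⟨hR2, hRavg⟩)
      have h2 : rfun x ≤ s/20 := csSup_le hSne (fun b hb => (hS_bdd x hb).2)
      refine ⟨hSne, h1, h2, ?_⟩
      intro R' hR'
      by_contra hcon
      push_neg at hcon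
      have : R' ∈ S x := ⟨lt_trans h1 hR', hcon⟩
      have h5 : R' ≤ rfun x := le_csSup (hS_bddAbove x) this
      linarith
    -- Vitali covering
    obtain ⟨u, hut, hdisj, hcov⟩ :=
      Vitali.exists_disjoint_subfamily_covering_enlargement_closedBall (E1 \ N)
        (id : E → E) rfun (s/20) (fun a ha => (hstop a ha).2.2.1) 5 (by norm_num)
    have hcover : E1 \ N ⊆ ⋃ b ∈ u, closedBall b (5 * rfun b) := by
      intro a ha
      obtain ⟨b, hb, hsub⟩ := hcov a ha
      exact Set.mem_biUnion hb (hsub (mem_closedBall_self (le_of_lt (hstop a ha).2.1)))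
    -- countability
    have hmem_u : ∀ b ∈ u, dist b y ≤ s ∧ 0 < rfun b ∧ rfun b ≤ s/20 ∧
        (∀ R, rfun b < R → avgS b R ≤ Λ) ∧ (S b).Nonempty := by
      intro b hb
      have hbt := hut hb
      have hstopb := hstop b hbt
      exact ⟨mem_closedBall.mp hbt.1.1, hstopb.2.1, hstopb.2.2.1, hstopb.2.2.2, hstopb.1⟩
    have hballsub : ∀ b ∈ u, closedBall b (rfun b) ⊆ B2 := by
      intro b hb
      obtain ⟨h1, h2, h3, -⟩ := hmem_u b hb
      exact closedBall_subset_closedBall' (by linarith)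
    have hball5sub : ∀ b ∈ u, closedBall b (5 * rfun b) ⊆ B2 := by
      intro b hb
      obtain ⟨h1, h2, h3, -⟩ := hmem_u b hb
      exact closedBall_subset_closedBall' (by linarith)
    haveI hcu : Countable ↥u := by
      have hc := MeasureTheory.Measure.countable_meas_pos_of_disjoint_iUnion
        (μ := (volume : Measure E))
        (As := fun b : ↥u => closedBall (b : E) (rfun (b : E)))
        (fun _ => measurableSet_closedBall)
        (fun i j hij => hdisj i.2 j.2 (Subtype.coe_injective.ne hij))
      have : {i : ↥u | 0 < volume (closedBall (i : E) (rfun (i : E)))} = Set.univ := by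
        ext i
        simp only [Set.mem_setOf_eq, Set.mem_univ, iff_true]
        exact measure_closedBall_pos _ _ (hmem_u i i.2).2.1
      rw [this] at hc
      exact Set.countable_univ_iff.mp hc
    -- choose Chebyshev radii
    have hchoice : ∀ b : ↥u, ∃ R, R ∈ S (b : E) ∧ rfun (b : E) / 2 < R := by
      intro b
      obtain ⟨-, h2, -, -, hne⟩ := hmem_u b b.2
      obtain ⟨R, hRS, hRlt⟩ := exists_lt_of_lt_csSup hne
        (show rfun (b : E)/2 < sSup (S (b : E)) from by
          have hrfl : sSup (S (b : E)) = rfun (b : E) := rfl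
          rw [hrfl]; linarith)
      exact ⟨R, hRS, hRlt⟩
    choose Rb hRbS hRbhalf using hchoice
    have hRb_pos : ∀ b : ↥u, 0 < Rb b := fun b => (hRbS b).1
    have hRb_le : ∀ b : ↥u, Rb b ≤ rfun (b : E) :=
      fun b => le_csSup (hS_bddAbove _) (hRbS b)
    -- Chebyshev inequality
    have hcheb : ∀ b : ↥u,
        Λ * (volume (closedBall (b : E) (Rb b))).toReal
          < ∫ z in closedBall (b : E) (Rb b), g z := by
      intro b
      have h := (hRbS b).2
      rw [havgSdef] at h
      have hvpos : 0 < (volume (closedBall (b : E) (Rb b))).toReal :=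
        vol_cb_pos _ (hRb_pos b)
      rw [lt_inv_mul_iff₀ hvpos] at h
      linarith [h]
    -- the comparison averages
    have hcb : ∀ b : ↥u, |cAvg f (b : E) (5 * rfun (b : E)) - c'| ≤ Λ := by
      intro b
      obtain ⟨h1, h2, h3, h4, -⟩ := hmem_u b b.2
      have h5pos : 0 < 5 * rfun (b : E) := by linarith
      calc |cAvg f (b : E) (5 * rfun (b : E)) - c'|
          ≤ (volume (closedBall (b : E) (5 * rfun (b : E)))).toReal⁻¹
            * ∫ x in closedBall (b : E) (5 * rfun (b : E)), |f x - c'| :=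
            abs_cAvg_sub_le hf h5pos c'
        _ = avgS (b : E) (5 * rfun (b : E)) := by
            simp only [havgSdef]
            rw [hg_eq _ _ (hball5sub b b.2)]
        _ ≤ Λ := h4 _ (by linarith)
    -- inclusion into the sets handled by the induction hypothesis
    have hincl : ∀ b : ↥u, (E1 \ N) ∩ closedBall (b : E) (5 * rfun (b : E))
        ⊆ {x ∈ closedBall (b : E) (5 * rfun (b : E)) |
            (k : ℝ) * Λ < |f x - cAvg f (b : E) (5 * rfun (b : E))|} := by
      intro b x hx
      obtain ⟨⟨hxE1, -⟩, hxB⟩ := hx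
      refine ⟨hxB, ?_⟩
      have h1 : ((k:ℝ)+1) * Λ < |f x - c'| := hxE1.2
      have h2 : |f x - c'| ≤ |f x - cAvg f (b : E) (5 * rfun (b : E))|
          + |cAvg f (b : E) (5 * rfun (b : E)) - c'| := abs_sub_le _ _ _
      have h3 := hcb b
      nlinarith
    -- induction hypothesis applied to the balls
    have hih : ∀ b : ↥u,
        volume {x ∈ closedBall (b : E) (5 * rfun (b : E)) |
            (k : ℝ) * Λ < |f x - cAvg f (b : E) (5 * rfun (b : E))|}
          ≤ (1/2 : ℝ≥0∞)^k * volume (closedBall (b : E) (5 * rfun (b : E))) := by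
      intro b
      obtain ⟨h1, h2, h3, -⟩ := hmem_u b b.2
      have hd : dist (b : E) x₀ ≤ dist (b : E) y + dist y x₀ := dist_triangle _ _ _
      exact ih (b : E) (5 * rfun (b : E)) (by linarith) (by linarith) (by linarith)
    -- scaling comparisons
    have hscale5 : ∀ b : ↥u, volume (closedBall (b : E) (5 * rfun (b : E)))
        ≤ ENNReal.ofReal ((10:ℝ)^n) * volume (closedBall (b : E) (Rb b)) := by
      intro b
      obtain ⟨-, h2, -, -⟩ := hmem_u b b.2
      exact vol_cb_le_scale (by linarith) 10 (by norm_num)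
        (by nlinarith [hRbhalf b, hRb_le b]) (hRb_pos b).le
    -- the ENNReal chain
    have hΛ0 : ENNReal.ofReal Λ ≠ 0 := by
      simp [ENNReal.ofReal_eq_zero, not_le, hΛpos]
    have hΛtop : ENNReal.ofReal Λ ≠ ⊤ := ENNReal.ofReal_ne_top
    -- step 4 : mass bound
    have hmass : ENNReal.ofReal Λ * ∑' b : ↥u, volume (closedBall (b : E) (Rb b))
        ≤ ENNReal.ofReal M' * volume B2 := by
      rw [← ENNReal.tsum_mul_left]
      have hterm : ∀ b : ↥u, ENNReal.ofReal Λ * volume (closedBall (b : E) (Rb b))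
          ≤ ∫⁻ z in closedBall (b : E) (Rb b), ENNReal.ofReal (g z) := by
        intro b
        have h1 := (hcheb b).le
        have h2 : ENNReal.ofReal (Λ * (volume (closedBall (b : E) (Rb b))).toReal)
            ≤ ENNReal.ofReal (∫ z in closedBall (b : E) (Rb b), g z) :=
          ENNReal.ofReal_le_ofReal h1
        rw [ENNReal.ofReal_mul hΛpos.le, ENNReal.ofReal_toReal
          measure_closedBall_lt_top.ne] at h2
        rwa [MeasureTheory.ofReal_integral_eq_lintegral_ofReal
          (hg_int.integrableOn)
          (by filter_upwards with x using hg_nonneg x)] at h2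
      calc ∑' b : ↥u, ENNReal.ofReal Λ * volume (closedBall (b : E) (Rb b))
          ≤ ∑' b : ↥u, ∫⁻ z in closedBall (b : E) (Rb b), ENNReal.ofReal (g z) :=
            ENNReal.tsum_le_tsum hterm
        _ = ∫⁻ z in ⋃ b : ↥u, closedBall (b : E) (Rb b), ENNReal.ofReal (g z) := by
            rw [lintegral_iUnion (fun _ => measurableSet_closedBall)]
            intro i j hij
            have hd := hdisj i.2 j.2 (Subtype.coe_injective.ne hij)
            exact hd.mono (closedBall_subset_closedBall (hRb_le i))
              (closedBall_subset_closedBall (hRb_le j))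
        _ ≤ ∫⁻ z in B2, ENNReal.ofReal (g z) := by
            apply lintegral_mono_set
            apply Set.iUnion_subset
            intro b
            exact (closedBall_subset_closedBall (hRb_le b)).trans (hballsub b b.2)
        _ = ENNReal.ofReal (∫ z in B2, g z) := by
            rw [MeasureTheory.ofReal_integral_eq_lintegral_ofReal
              (hg_int.integrableOn)
              (by filter_upwards with x using hg_nonneg x)]
        _ ≤ ENNReal.ofReal (M' * (volume B2).toReal) :=
            ENNReal.ofReal_le_ofReal (hg_total B2)
        _ = ENNReal.ofReal M' * volume B2 := by
            rw [ENNReal.ofReal_mul hM'.le, ENNReal.ofReal_toReal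
              measure_closedBall_lt_top.ne]
    have hsum_Db : ∑' b : ↥u, volume (closedBall (b : E) (Rb b))
        ≤ (ENNReal.ofReal M' * volume B2) / ENNReal.ofReal Λ := by
      rw [ENNReal.le_div_iff_mul_le (Or.inl hΛ0) (Or.inl hΛtop), mul_comm]
      exact hmass
    -- volume of B2 in terms of the ball
    have hvol2E : volume B2 = ENNReal.ofReal ((2:ℝ)^n) * volume (closedBall y s) := by
      rw [hB2def, vol_cb y (by linarith : (0:ℝ) ≤ 2*s), vol_cb y hs.le, mul_pow,
        ENNReal.ofReal_mul (by positivity), mul_assoc]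
    -- the constant inequality
    have hconst : ENNReal.ofReal ((10:ℝ)^n) *
        ((ENNReal.ofReal M' * (ENNReal.ofReal ((2:ℝ)^n) * volume (closedBall y s)))
          / ENNReal.ofReal Λ)
        ≤ (1/2 : ℝ≥0∞) * volume (closedBall y s) := by
      have key : ENNReal.ofReal ((10:ℝ)^n) * ENNReal.ofReal M'
          * ENNReal.ofReal ((2:ℝ)^n) * (ENNReal.ofReal Λ)⁻¹ ≤ (1/2 : ℝ≥0∞) := by
        rw [← ENNReal.ofReal_mul (by positivity), ← ENNReal.ofReal_mul (by positivity),
          ← div_eq_mul_inv, ENNReal.div_le_iff hΛ0 hΛtop]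
        have h2 : (1/2 : ℝ≥0∞) * ENNReal.ofReal Λ = ENNReal.ofReal (Λ/2) := by
          rw [ENNReal.ofReal_div_of_pos (by norm_num), ENNReal.ofReal_ofNat,
            ENNReal.div_eq_inv_mul, mul_one]
          rw [mul_comm]
          rfl
        rw [h2]
        apply ENNReal.ofReal_le_ofReal
        have h20 : (10:ℝ)^n * 2^n ≤ 40^n := by
          rw [← mul_pow]
          apply pow_le_pow_left₀ (by norm_num) (by norm_num)
        rw [hΛdef]
        nlinarith
      calc ENNReal.ofReal ((10:ℝ)^n) *
          ((ENNReal.ofReal M' * (ENNReal.ofReal ((2:ℝ)^n) * volume (closedBall y s)))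
            / ENNReal.ofReal Λ)
          = (ENNReal.ofReal ((10:ℝ)^n) * ENNReal.ofReal M'
              * ENNReal.ofReal ((2:ℝ)^n) * (ENNReal.ofReal Λ)⁻¹)
            * volume (closedBall y s) := by
            rw [div_eq_mul_inv]; ring
        _ ≤ (1/2 : ℝ≥0∞) * volume (closedBall y s) := by
            exact mul_le_mul_left key _
    -- assembling everything
    push_cast
    have hE1N : volume E1 ≤ ∑' b : ↥u,
        volume ((E1 \ N) ∩ closedBall (b : E) (5 * rfun (b : E))) := by
      have h1 : volume E1 ≤ volume (E1 \ N) := by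
        conv_lhs => rw [show E1 = (E1 \ N) ∪ (E1 ∩ N) from (Set.diff_union_inter E1 N).symm]
        refine (measure_union_le _ _).trans ?_
        have h0 : volume (E1 ∩ N) = 0 :=
          measure_mono_null Set.inter_subset_right hNnull
        simp [h0]
      have h2 : E1 \ N ⊆ ⋃ b : ↥u, ((E1 \ N) ∩ closedBall (b : E) (5 * rfun (b : E))) := by
        intro a ha
        have := hcover ha
        rw [Set.mem_iUnion₂] at this
        obtain ⟨b, hb, hab⟩ := this
        exact Set.mem_iUnion.mpr ⟨⟨b, hb⟩, ha, hab⟩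
      exact h1.trans ((measure_mono h2).trans (measure_iUnion_le _))
    have hfinal : volume E1 ≤ (1/2 : ℝ≥0∞)^(k+1) * volume (closedBall y s) :=
      calc volume E1
        ≤ ∑' b : ↥u, volume ((E1 \ N) ∩ closedBall (b : E) (5 * rfun (b : E))) := hE1N
      _ ≤ ∑' b : ↥u, (1/2 : ℝ≥0∞)^k * volume (closedBall (b : E) (5 * rfun (b : E))) :=
          ENNReal.tsum_le_tsum (fun b => (measure_mono (hincl b)).trans (hih b))
      _ = (1/2 : ℝ≥0∞)^k * ∑' b : ↥u, volume (closedBall (b : E) (5 * rfun (b : E))) :=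
          ENNReal.tsum_mul_left
      _ ≤ (1/2 : ℝ≥0∞)^k * (ENNReal.ofReal ((10:ℝ)^n)
            * ∑' b : ↥u, volume (closedBall (b : E) (Rb b))) := by
          gcongr
          rw [← ENNReal.tsum_mul_left]
          exact ENNReal.tsum_le_tsum hscale5
      _ ≤ (1/2 : ℝ≥0∞)^k * (ENNReal.ofReal ((10:ℝ)^n)
            * ((ENNReal.ofReal M' * volume B2) / ENNReal.ofReal Λ)) := by
          gcongr
      _ ≤ (1/2 : ℝ≥0∞)^k * ((1/2 : ℝ≥0∞) * volume (closedBall y s)) :=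
          mul_le_mul_right (by rw [hvol2E]; exact hconst) _
      _ = (1/2 : ℝ≥0∞)^(k+1) * volume (closedBall y s) := by
          rw [pow_succ]; ring
    exact hfinal

open JNdev in
set_option maxHeartbeats 1000000 in
/-- John–Nirenberg inequality for `BMO_θ(ρ)`. -/
theorem stmt14 (n : ℕ) (ρ : EuclideanSpace ℝ (Fin n) → ℝ) (hρ : ∀ x, 0 < ρ x)
    (l₀ C₀ θ : ℝ) (hl₀ : 0 < l₀) (hC₀ : 1 < C₀) (hθ : 0 < θ)
    (hLem : ∀ x y : EuclideanSpace ℝ (Fin n),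
      C₀⁻¹ * (1 + dist x y / ρ x) ^ (-l₀) ≤ ρ y / ρ x ∧
      ρ y / ρ x ≤ C₀ * (1 + dist x y / ρ x) ^ (l₀ / (l₀ + 1)))
    (f : EuclideanSpace ℝ (Fin n) → ℝ) (hfloc : LocallyIntegrable f volume)
    (hbmo : BddAbove (bmoOscSet ρ θ f)) (hfne : bmoNorm ρ θ f ≠ 0) :
    ∃ γ > (0:ℝ), ∃ C > (0:ℝ), ∀ (x₀ : EuclideanSpace ℝ (Fin n)) (r : ℝ), 0 < r →
      (volume (ball x₀ r)).toReal⁻¹ *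
        ∫ x in ball x₀ r,
          Real.exp (γ * |f x - ballAvg f x₀ r| /
            (bmoNorm ρ θ f * (1 + r / ρ x₀) ^ ((l₀ + 1) * θ))) ≤ C := by
  classical
  set M : ℝ := bmoNorm ρ θ f with hMdef
  have hbase_pos : ∀ (y : EuclideanSpace ℝ (Fin n)) (s : ℝ), 0 < s → 0 < 1 + s / ρ y := by
    intro y s hs
    have := hρ y
    positivity
  have hMnn : 0 ≤ M := by
    apply Real.sSup_nonneg
    rintro a ⟨y, s, hs, rfl⟩
    have h1 : (0:ℝ) < (1 + s / ρ y) ^ θ := Real.rpow_pos_of_pos (hbase_pos y s hs) θ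
    have h2 : 0 ≤ ∫ x in ball y s, |f x - ballAvg f y s| :=
      integral_nonneg (fun x => abs_nonneg _)
    positivity
  have hM : 0 < M := lt_of_le_of_ne hMnn (Ne.symm hfne)
  -- degenerate case n = 0
  rcases Nat.eq_zero_or_pos n with hn0 | hnpos
  · exfalso
    apply hfne
    subst hn0
    haveI : Subsingleton (EuclideanSpace ℝ (Fin 0)) :=
      ⟨fun a b => by ext i; exact i.elim0⟩
    have hzero : ∀ a ∈ bmoOscSet ρ θ f, a = 0 := by
      rintro a ⟨y, s, hs, rfl⟩
      have hconst : ∀ x : EuclideanSpace ℝ (Fin 0), f x = f y :=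
        fun x => by rw [Subsingleton.elim x y]
      have h1 : (∫ x in ball y s, |f x - ballAvg f y s|)
          = (volume (ball y s)).toReal • |f y - ballAvg f y s| := by
        rw [setIntegral_congr_fun measurableSet_ball
          (fun x _ => by rw [hconst x]), setIntegral_const, measureReal_def]
      have h2 : (∫ x in ball y s, f x) = (volume (ball y s)).toReal • f y := by
        rw [setIntegral_congr_fun measurableSet_ball
          (fun x _ => by rw [hconst x]), setIntegral_const, measureReal_def]
      rcases eq_or_ne (volume (ball y s)).toReal 0 with hv | hv
      · rw [h1, hv, zero_smul, mul_zero]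
      · have : ballAvg f y s = f y := by
          rw [ballAvg, h2, smul_eq_mul, ← mul_assoc, inv_mul_cancel₀ hv, one_mul]
        rw [h1, this, sub_self, abs_zero, smul_zero, mul_zero]
    have hne : (bmoOscSet ρ θ f).Nonempty := by
      refine ⟨_, ⟨0, 1, one_pos, rfl⟩⟩
    have h1 : bmoNorm ρ θ f ≤ 0 := csSup_le hne (fun a ha => le_of_eq (hzero a ha))
    exact le_antisymm h1 hMnn
  -- now n ≥ 1
  haveI : Nonempty (Fin n) := ⟨⟨0, hnpos⟩⟩
  haveI : Nontrivial (EuclideanSpace ℝ (Fin n)) := by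
    apply Module.nontrivial_of_finrank_pos (R := ℝ)
    rw [finrank_euclideanSpace_fin]
    exact hnpos
  -- ae equality of balls and closed balls
  have haecb : ∀ (y : EuclideanSpace ℝ (Fin n)) (s : ℝ),
      (closedBall y s : Set (EuclideanSpace ℝ (Fin n))) =ᵐ[volume] ball y s := by
    intro y s
    rw [MeasureTheory.ae_eq_set]
    constructor
    · rw [closedBall_diff_ball]
      exact Measure.addHaar_sphere volume y s
    · rw [Set.diff_eq_empty.mpr ball_subset_closedBall]
      exact measure_empty
  have hvol_eq : ∀ (y : EuclideanSpace ℝ (Fin n)) (s : ℝ),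
      volume (closedBall y s) = volume (ball y s) :=
    fun y s => Measure.addHaar_closedBall_eq_addHaar_ball volume y s
  have havg_eq : ∀ (y : EuclideanSpace ℝ (Fin n)) (s : ℝ),
      cAvg f y s = ballAvg f y s := by
    intro y s
    rw [cAvg, ballAvg, hvol_eq, setIntegral_congr_set (haecb y s)]
  -- oscillation bound from the BMO norm
  have hosc_ball : ∀ (y : EuclideanSpace ℝ (Fin n)) (s : ℝ), 0 < s →
      (∫ x in ball y s, |f x - ballAvg f y s|)
        ≤ M * ((1 + s / ρ y) ^ θ * (volume (ball y s)).toReal) := by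
    intro y s hs
    have hmem : ((1 + s / ρ y) ^ θ * (volume (ball y s)).toReal)⁻¹ *
        (∫ x in ball y s, |f x - ballAvg f y s|) ∈ bmoOscSet ρ θ f := ⟨y, s, hs, rfl⟩
    have hle := le_csSup hbmo hmem
    have hc : 0 < (1 + s / ρ y) ^ θ * (volume (ball y s)).toReal := by
      have h1 : (0:ℝ) < (1 + s / ρ y) ^ θ := Real.rpow_pos_of_pos (hbase_pos y s hs) θ
      have h2 : 0 < (volume (ball y s)).toReal :=
        ENNReal.toReal_pos (measure_ball_pos volume y hs).ne' measure_ball_lt_top.ne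
      positivity
    calc (∫ x in ball y s, |f x - ballAvg f y s|)
        = ((1 + s / ρ y) ^ θ * (volume (ball y s)).toReal) *
          (((1 + s / ρ y) ^ θ * (volume (ball y s)).toReal)⁻¹ *
            (∫ x in ball y s, |f x - ballAvg f y s|)) := by
          rw [← mul_assoc, mul_inv_cancel₀ hc.ne', one_mul]
      _ ≤ ((1 + s / ρ y) ^ θ * (volume (ball y s)).toReal) * M := by
          exact mul_le_mul_of_nonneg_left hle hc.le
      _ = M * ((1 + s / ρ y) ^ θ * (volume (ball y s)).toReal) := by ring
  -- global constants
  set Creal : ℝ := 8 * C₀ * (4:ℝ) ^ l₀ with hCrealdef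
  have hCreal8 : (8:ℝ) ≤ Creal := by
    have h4 : (1:ℝ) ≤ (4:ℝ) ^ l₀ := Real.one_le_rpow (by norm_num) hl₀.le
    rw [hCrealdef]; nlinarith
  have hCrealpos : 0 < Creal := by linarith
  set K₁ : ℝ := Creal ^ θ with hK₁def
  have hK₁pos : 0 < K₁ := Real.rpow_pos_of_pos hCrealpos θ
  set A : ℝ := 2 * 40^n * ((1 + 2^n) * K₁) with hAdef
  have hApos : 0 < A := by positivity
  set γ : ℝ := Real.log 2 / (2 * A) with hγdef
  have hγpos : 0 < γ := by
    apply div_pos (Real.log_pos (by norm_num)) (by linarith)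
  set q : ℝ≥0∞ := ENNReal.ofReal (Real.sqrt 2) * (1/2 : ℝ≥0∞) with hqdef
  have hs2lt : Real.sqrt 2 < 2 := by
    nlinarith [Real.sq_sqrt (by norm_num : (2:ℝ) ≥ 0).le, Real.sqrt_nonneg 2,
      Real.sq_sqrt (by norm_num : (0:ℝ) ≤ 2)]
  have hqlt : q < 1 := by
    rw [hqdef]
    have : ENNReal.ofReal (Real.sqrt 2) * (1/2 : ℝ≥0∞)
        = ENNReal.ofReal (Real.sqrt 2 * (1/2)) := by
      rw [ENNReal.ofReal_mul (Real.sqrt_nonneg 2)]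
      congr 1
      rw [ENNReal.ofReal_div_of_pos (by norm_num), ENNReal.ofReal_one,
        ENNReal.ofReal_ofNat]
    rw [this, ← ENNReal.ofReal_one]
    apply ENNReal.ofReal_lt_ofReal_iff_of_nonneg (by norm_num) |>.mpr
    nlinarith [Real.sqrt_nonneg 2]
  set ctot : ℝ≥0∞ := 2 * ENNReal.ofReal (Real.sqrt 2) * (1 - q)⁻¹ with hctotdef
  have hctop : ctot ≠ ⊤ := by
    rw [hctotdef]
    apply ENNReal.mul_ne_top
    · exact ENNReal.mul_ne_top (by norm_num) ENNReal.ofReal_ne_top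
    · rw [ENNReal.inv_ne_top]
      rw [ne_eq, tsub_eq_zero_iff_le]
      exact fun h => absurd (lt_of_lt_of_le hqlt h) (lt_irrefl _)
  refine ⟨γ, hγpos, ctot.toReal + 1, by positivity, ?_⟩
  intro x₀ r hr
  have hρ₀ := hρ x₀
  set Ψ : ℝ := (1 + r / ρ x₀) ^ ((l₀ + 1) * θ) with hΨdef
  have hbase₀ : 0 < 1 + r / ρ x₀ := hbase_pos x₀ r hr
  have hΨpos : 0 < Ψ := Real.rpow_pos_of_pos hbase₀ _
  set u : ℝ := M * Ψ with hudef
  have hupos : 0 < u := by positivity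
  -- the weight estimate
  have hweight : ∀ (y : EuclideanSpace ℝ (Fin n)) (s : ℝ), 0 < s → s ≤ 8*r →
      dist y x₀ ≤ 4*r → (1 + s / ρ y) ^ θ ≤ K₁ * Ψ := by
    intro y s hs hs8 hd4
    have hρy := hρ y
    have hT1 : (1:ℝ) ≤ 1 + dist x₀ y / ρ x₀ := by
      have : 0 ≤ dist x₀ y / ρ x₀ := by positivity
      linarith
    set T : ℝ := (1 + dist x₀ y / ρ x₀) ^ l₀ with hTdef
    have hTpos : 0 < T := Real.rpow_pos_of_pos (by linarith) l₀
    have hT1' : (1:ℝ) ≤ T := Real.one_le_rpow hT1 hl₀.le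
    -- lower bound for ρ y
    have hlow : ρ x₀ * (C₀⁻¹ * T⁻¹) ≤ ρ y := by
      have h1 := (hLem x₀ y).1
      have h2 : (1 + dist x₀ y / ρ x₀) ^ (-l₀) = T⁻¹ := by
        rw [hTdef, Real.rpow_neg (by linarith)]
      rw [h2] at h1
      rw [le_div_iff₀ hρ₀] at h1
      linarith
    have hlowpos : 0 < ρ x₀ * (C₀⁻¹ * T⁻¹) := by positivity
    -- T bounded by the weight on the base ball
    set P : ℝ := (1 + r / ρ x₀) ^ l₀ with hPdef
    have hPpos : 0 < P := Real.rpow_pos_of_pos hbase₀ l₀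
    have hP1 : (1:ℝ) ≤ P := Real.one_le_rpow (by
      have : 0 ≤ r / ρ x₀ := by positivity
      linarith) hl₀.le
    have hT_le : T ≤ 4 ^ l₀ * P := by
      have h1 : 1 + dist x₀ y / ρ x₀ ≤ 4 * (1 + r / ρ x₀) := by
        rw [dist_comm]
        have h2 : dist y x₀ / ρ x₀ ≤ 4 * r / ρ x₀ := by gcongr
        have h3 : 0 ≤ r / ρ x₀ := by positivity
        have h4 : 4 * r / ρ x₀ = 4 * (r / ρ x₀) := by ring
        nlinarith
      calc T ≤ (4 * (1 + r / ρ x₀)) ^ l₀ :=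
            Real.rpow_le_rpow (by linarith) h1 hl₀.le
        _ = 4 ^ l₀ * P := by
            rw [hPdef, ← Real.mul_rpow (by norm_num) (by linarith)]
    -- main chain
    have hsρ : s / ρ y ≤ Creal * ((r / ρ x₀) * P) := by
      have h1 : s / ρ y ≤ 8 * r / ρ y := by gcongr
      have h2 : 8 * r / ρ y ≤ 8 * r / (ρ x₀ * (C₀⁻¹ * T⁻¹)) := by
        gcongr
      have h3 : 8 * r / (ρ x₀ * (C₀⁻¹ * T⁻¹)) = 8 * C₀ * T * (r / ρ x₀) := by
        field_simp
      have h4 : 8 * C₀ * T * (r / ρ x₀) ≤ 8 * C₀ * (4 ^ l₀ * P) * (r / ρ x₀) := by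
        gcongr
        first
        | exact hT_le
        | skip
      have h7 : 8 * C₀ * (4 ^ l₀ * P) * (r / ρ x₀) = Creal * ((r / ρ x₀) * P) := by
        rw [hCrealdef]; ring
      linarith
    have hmain : 1 + s / ρ y ≤ Creal * (1 + r / ρ x₀) ^ (l₀ + 1) := by
      have h1 : Creal * (1 + r / ρ x₀) ^ (l₀ + 1)
          = Creal * P + Creal * ((r / ρ x₀) * P) := by
        rw [Real.rpow_add_one hbase₀.ne', hPdef]
        ring
      have h2 : (1:ℝ) ≤ Creal * P := by nlinarith
      linarith
    calc (1 + s / ρ y) ^ θ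
        ≤ (Creal * (1 + r / ρ x₀) ^ (l₀ + 1)) ^ θ := by
          apply Real.rpow_le_rpow (by positivity) hmain hθ.le
      _ = K₁ * Ψ := by
          rw [Real.mul_rpow hCrealpos.le (by positivity)]
          congr 1
          rw [hΨdef, Real.rpow_mul hbase₀.le]
  -- oscillation hypothesis for the induction lemma
  have hosc : ∀ (y : EuclideanSpace ℝ (Fin n)) (s : ℝ), 0 < s → s ≤ 8*r →
      dist y x₀ ≤ 4*r →
      (∫ x in closedBall y s, |f x - cAvg f y s|)
        ≤ (K₁ * u) * (volume (closedBall y s)).toReal := by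
    intro y s hs hs8 hd4
    have h0 : (∫ x in closedBall y s, |f x - cAvg f y s|)
        = ∫ x in ball y s, |f x - ballAvg f y s| := by
      rw [havg_eq y s, setIntegral_congr_set (haecb y s)]
    rw [h0, show (volume (closedBall y s)).toReal = (volume (ball y s)).toReal from
      by rw [hvol_eq]]
    have h1 := hosc_ball y s hs
    have h2 := hweight y s hs hs8 hd4
    calc (∫ x in ball y s, |f x - ballAvg f y s|)
        ≤ M * ((1 + s / ρ y) ^ θ * (volume (ball y s)).toReal) := h1
      _ ≤ M * ((K₁ * Ψ) * (volume (ball y s)).toReal) := by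
          have h3 : (0:ℝ) ≤ (volume (ball y s)).toReal := ENNReal.toReal_nonneg
          have h4 : (0:ℝ) ≤ M := hM.le
          exact mul_le_mul_of_nonneg_left
            (mul_le_mul_of_nonneg_right h2 h3) h4
      _ = (K₁ * u) * (volume (ball y s)).toReal := by rw [hudef]; ring
  have hMt : 0 < K₁ * u := by positivity
  have key := jn_induction f hfloc x₀ r (K₁ * u) hr hMt hosc
  set Λ : ℝ := 2*40^n*((1+2^n)*(K₁*u)) with hΛdef2
  have hΛu : Λ = A * u := by rw [hΛdef2, hAdef]; ring
  have hΛpos : 0 < Λ := by rw [hΛu]; positivity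
  -- measurable representative
  have hfaesm := hfloc.aestronglyMeasurable
  set f' := hfaesm.mk f with hf'def
  have hf'm : StronglyMeasurable f' := hfaesm.stronglyMeasurable_mk
  have hae : f =ᵐ[volume] f' := hfaesm.ae_eq_mk
  set b₀ : ℝ := ballAvg f x₀ r with hb₀def
  set hfun : EuclideanSpace ℝ (Fin n) → ℝ := fun x => |f' x - b₀| with hhdef
  have hhm : Measurable hfun := (hf'm.measurable.sub_const b₀).abs
  -- measure bounds in terms of hfun
  have hsets : ∀ k : ℕ, volume {x ∈ closedBall x₀ r | (k:ℝ) * Λ < hfun x}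
      ≤ (1/2 : ℝ≥0∞)^k * volume (closedBall x₀ r) := by
    intro k
    have hk := key k x₀ r hr (by linarith) (by rw [dist_self]; linarith)
    rw [havg_eq x₀ r, ← hb₀def] at hk
    have hae_set : {x | x ∈ closedBall x₀ r ∧ (k:ℝ)*Λ < hfun x}
        =ᵐ[volume] {x | x ∈ closedBall x₀ r ∧ (k:ℝ)*Λ < |f x - b₀|} := by
      apply Filter.eventuallyEq_set.mpr
      filter_upwards [hae] with x hx
      rw [hhdef]
      simp only [Set.mem_setOf_eq, hx]
    calc volume {x ∈ closedBall x₀ r | (k:ℝ)*Λ < hfun x}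
        = volume {x ∈ closedBall x₀ r | (k:ℝ)*Λ < |f x - b₀|} := measure_congr hae_set
      _ ≤ (1/2 : ℝ≥0∞)^k * volume (closedBall x₀ r) := hk
  -- switch the integral to the measurable representative
  have hintcong : (∫ x in ball x₀ r, Real.exp (γ * |f x - b₀| / u))
      = ∫ x in ball x₀ r, Real.exp (γ * hfun x / u) := by
    apply integral_congr_ae
    apply ae_restrict_of_ae
    filter_upwards [hae] with x hx
    rw [hhdef]
    simp only [hx]
  set F : EuclideanSpace ℝ (Fin n) → ℝ := fun x => Real.exp (γ * hfun x / u) with hFdef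
  have hFm : Measurable F := Real.measurable_exp.comp ((hhm.const_mul γ).div_const u)
  have hFnn : 0 ≤ᵐ[volume.restrict (ball x₀ r)] F :=
    Filter.Eventually.of_forall (fun x => (Real.exp_pos _).le)
  rw [hintcong, MeasureTheory.integral_eq_lintegral_of_nonneg_ae hFnn
    hFm.aestronglyMeasurable]
  -- the exponent identity
  have hγΛu : γ * Λ / u = Real.log (Real.sqrt 2) := by
    rw [hΛu, hγdef, Real.log_sqrt (by norm_num)]
    field_simp
  -- pointwise domination by a layered sum
  have hpt : ∀ x, ENNReal.ofReal (F x) ≤ ∑' k : ℕ,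
      Set.indicator {z | (k:ℝ)*Λ ≤ hfun z ∧ hfun z < ((k:ℝ)+1)*Λ}
        (fun _ => ENNReal.ofReal (Real.sqrt 2 ^ (k+1))) x := by
    intro x
    set k := ⌊hfun x / Λ⌋₊ with hkdef
    have hhx0 : 0 ≤ hfun x := abs_nonneg _
    have h1 : (k:ℝ) * Λ ≤ hfun x := by
      have h := Nat.floor_le (a := hfun x / Λ) (by positivity)
      rw [← hkdef] at h
      exact (le_div_iff₀ hΛpos).mp h
    have h2 : hfun x < ((k:ℝ)+1) * Λ := by
      have h := Nat.lt_floor_add_one (hfun x / Λ)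
      rw [← hkdef] at h
      exact (div_lt_iff₀ hΛpos).mp h
    have hmem : x ∈ {z | (k:ℝ)*Λ ≤ hfun z ∧ hfun z < ((k:ℝ)+1)*Λ} := ⟨h1, h2⟩
    have hFle : F x ≤ Real.sqrt 2 ^ (k+1) := by
      rw [hFdef]
      have hexp : γ * hfun x / u ≤ ((k:ℝ)+1) * Real.log (Real.sqrt 2) := by
        rw [← hγΛu]
        calc γ * hfun x / u ≤ γ * (((k:ℝ)+1)*Λ) / u := by gcongr
          _ = ((k:ℝ)+1) * (γ * Λ / u) := by field_simp
      calc Real.exp (γ * hfun x / u)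
          ≤ Real.exp (((k:ℝ)+1) * Real.log (Real.sqrt 2)) := Real.exp_le_exp.mpr hexp
        _ = Real.sqrt 2 ^ (k+1) := by
            rw [show ((k:ℝ)+1) = ((k+1 : ℕ):ℝ) by push_cast; ring, Real.exp_nat_mul,
              Real.exp_log (Real.sqrt_pos.mpr (by norm_num))]
    calc ENNReal.ofReal (F x) ≤ ENNReal.ofReal (Real.sqrt 2 ^ (k+1)) :=
          ENNReal.ofReal_le_ofReal hFle
      _ = Set.indicator {z | (k:ℝ)*Λ ≤ hfun z ∧ hfun z < ((k:ℝ)+1)*Λ}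
            (fun _ => ENNReal.ofReal (Real.sqrt 2^(k+1))) x :=
          (Set.indicator_of_mem hmem
            (fun _ => ENNReal.ofReal (Real.sqrt 2^(k+1)))).symm
      _ ≤ _ := ENNReal.le_tsum k
  have hAkm : ∀ k:ℕ, MeasurableSet {z | (k:ℝ)*Λ ≤ hfun z ∧ hfun z < ((k:ℝ)+1)*Λ} :=
    fun k => (measurableSet_le measurable_const hhm).inter
      (measurableSet_lt hhm measurable_const)
  -- lintegral bound
  have hlin : (∫⁻ x in ball x₀ r, ENNReal.ofReal (F x))
      ≤ ∑' k:ℕ, ENNReal.ofReal (Real.sqrt 2^(k+1)) *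
          volume ({z | (k:ℝ)*Λ ≤ hfun z ∧ hfun z < ((k:ℝ)+1)*Λ} ∩ ball x₀ r) := by
    calc (∫⁻ x in ball x₀ r, ENNReal.ofReal (F x))
        ≤ ∫⁻ x in ball x₀ r, ∑' k : ℕ,
            Set.indicator {z | (k:ℝ)*Λ ≤ hfun z ∧ hfun z < ((k:ℝ)+1)*Λ}
              (fun _ => ENNReal.ofReal (Real.sqrt 2 ^ (k+1))) x :=
          lintegral_mono (fun x => hpt x)
      _ = ∑' k:ℕ, ∫⁻ x in ball x₀ r,
            Set.indicator {z | (k:ℝ)*Λ ≤ hfun z ∧ hfun z < ((k:ℝ)+1)*Λ}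
              (fun _ => ENNReal.ofReal (Real.sqrt 2 ^ (k+1))) x :=
          lintegral_tsum (fun k => (measurable_const.indicator (hAkm k)).aemeasurable)
      _ = ∑' k:ℕ, ENNReal.ofReal (Real.sqrt 2^(k+1)) *
            volume ({z | (k:ℝ)*Λ ≤ hfun z ∧ hfun z < ((k:ℝ)+1)*Λ} ∩ ball x₀ r) := by
          apply tsum_congr
          intro k
          rw [lintegral_indicator (hAkm k), setLIntegral_const,
            Measure.restrict_apply (hAkm k)]
  -- measure of each layer
  have hAk_bound : ∀ k:ℕ,
      volume ({z | (k:ℝ)*Λ ≤ hfun z ∧ hfun z < ((k:ℝ)+1)*Λ} ∩ ball x₀ r)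
        ≤ 2 * (1/2:ℝ≥0∞)^k * volume (closedBall x₀ r) := by
    intro k
    cases k with
    | zero =>
      calc volume ({z | ((0:ℕ):ℝ)*Λ ≤ hfun z ∧ hfun z < (((0:ℕ):ℝ)+1)*Λ} ∩ ball x₀ r)
          ≤ volume (ball x₀ r) := measure_mono Set.inter_subset_right
        _ = volume (closedBall x₀ r) := (hvol_eq x₀ r).symm
        _ ≤ 2 * (1/2:ℝ≥0∞)^0 * volume (closedBall x₀ r) := by
            rw [pow_zero, mul_one]
            exact le_mul_of_one_le_left (by positivity) (by norm_num)
    | succ j =>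
      have hsubs : ({z | ((j+1:ℕ):ℝ)*Λ ≤ hfun z ∧ hfun z < (((j+1:ℕ):ℝ)+1)*Λ}
            ∩ ball x₀ r)
          ⊆ {x ∈ closedBall x₀ r | (j:ℝ)*Λ < hfun x} := by
        rintro x ⟨⟨hx1, -⟩, hx2⟩
        refine ⟨ball_subset_closedBall hx2, ?_⟩
        have hcast : ((j+1:ℕ):ℝ) = (j:ℝ)+1 := by push_cast; ring
        rw [hcast] at hx1
        nlinarith
      calc volume ({z | ((j+1:ℕ):ℝ)*Λ ≤ hfun z ∧ hfun z < (((j+1:ℕ):ℝ)+1)*Λ}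
            ∩ ball x₀ r)
          ≤ volume {x ∈ closedBall x₀ r | (j:ℝ)*Λ < hfun x} := measure_mono hsubs
        _ ≤ (1/2:ℝ≥0∞)^j * volume (closedBall x₀ r) := hsets j
        _ = 2 * (1/2:ℝ≥0∞)^(j+1) * volume (closedBall x₀ r) := by
            rw [pow_succ, ← mul_assoc]
            congr 1
            rw [one_div, mul_right_comm,
              ENNReal.mul_inv_cancel (by norm_num) (by norm_num), one_mul]
  -- summing up
  have hsum : ∑' k:ℕ, ENNReal.ofReal (Real.sqrt 2^(k+1)) *
      (2 * (1/2:ℝ≥0∞)^k * volume (closedBall x₀ r))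
        = ctot * volume (closedBall x₀ r) := by
    have hterm : ∀ k:ℕ, ENNReal.ofReal (Real.sqrt 2^(k+1)) *
        (2 * (1/2:ℝ≥0∞)^k * volume (closedBall x₀ r))
          = (2 * ENNReal.ofReal (Real.sqrt 2) * volume (closedBall x₀ r)) * q^k := by
      intro k
      rw [ENNReal.ofReal_pow (Real.sqrt_nonneg 2), pow_succ, hqdef, mul_pow]
      ring
    calc ∑' k:ℕ, ENNReal.ofReal (Real.sqrt 2^(k+1)) *
        (2 * (1/2:ℝ≥0∞)^k * volume (closedBall x₀ r))
        = ∑' k:ℕ, (2 * ENNReal.ofReal (Real.sqrt 2) * volume (closedBall x₀ r)) * q^k := by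
          exact tsum_congr hterm
      _ = (2 * ENNReal.ofReal (Real.sqrt 2) * volume (closedBall x₀ r)) * (1-q)⁻¹ := by
          rw [ENNReal.tsum_mul_left, ENNReal.tsum_geometric]
      _ = ctot * volume (closedBall x₀ r) := by
          rw [hctotdef]; ring
  have hlin2 : (∫⁻ x in ball x₀ r, ENNReal.ofReal (F x))
      ≤ ctot * volume (closedBall x₀ r) := by
    refine hlin.trans ?_
    rw [← hsum]
    exact ENNReal.tsum_le_tsum (fun k => mul_le_mul_right (hAk_bound k) _)
  -- final computation
  have hvball : 0 < (volume (ball x₀ r)).toReal :=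
    ENNReal.toReal_pos (measure_ball_pos volume x₀ hr).ne' measure_ball_lt_top.ne
  have h1 : (∫⁻ x in ball x₀ r, ENNReal.ofReal (F x)).toReal
      ≤ ctot.toReal * (volume (ball x₀ r)).toReal := by
    have h2 := ENNReal.toReal_mono
      (ENNReal.mul_ne_top hctop measure_closedBall_lt_top.ne) hlin2
    rw [ENNReal.toReal_mul, hvol_eq x₀ r] at h2
    exact h2
  calc (volume (ball x₀ r)).toReal⁻¹ *
      (∫⁻ x in ball x₀ r, ENNReal.ofReal (F x)).toReal
      ≤ (volume (ball x₀ r)).toReal⁻¹ *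
        (ctot.toReal * (volume (ball x₀ r)).toReal) := by
        exact mul_le_mul_of_nonneg_left h1 (by positivity)
    _ = ctot.toReal := by field_simp
    _ ≤ ctot.toReal + 1 := by linarith
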